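/- arXiv:2308.05852 — 6 statements merged into one kernel-verified Lean document; each statement's English description precedes it below -/
import Mathlib

section
/- Let T ⊂ ℝ² be a nondegenerate triangle with vertices z₁, z₂, z₃, edges eᵢ opposite zᵢ with lengths ℓᵢ = |eᵢ| and outward unit normals nᵢ. Then for every affine map v : ℝ² → ℝ², ∫_T (div v) dx = −(1/2) ∑_{i=1}^{3} ℓᵢ (v(zᵢ) · nᵢ); equivalently, since div v is the constant trace of the linear part A of v, area(T) · trace(A) = −(1/2) ∑_{i=1}^{3} ℓᵢ (v(zᵢ) · nᵢ). -/
/-!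
Fix an orientation of the plane for which the triangle is positively oriented, and let `ω` be
its area form and `J` the rotation by a right angle, so that `⟪J a, b⟫ = ω a b`. The outward
unit normal of an edge with edge vector `e` is `-J e / ‖e‖`, hence `ℓᵢ ⟪v zᵢ, nᵢ⟫ = ω (v zᵢ) eᵢ`.
For affine `v` with linear part `A` the sum of these terms is `-tr A · ω (z₂ - z₁) (z₃ - z₁)`,
because `ω (A x) y + ω x (A y) = tr A · ω x y` in dimension two, while `ω (z₂ - z₁) (z₃ - z₁)` is
twice the area: the parallelogram it measures is the triangle together with its point reflection
in the midpoint of `[z₂, z₃]`.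
-/

open scoped RealInnerProductSpace Pointwise EuclideanSpace
open MeasureTheory Module Set

theorem AlternatingMap.apply_map_add_apply_map_eq_trace_mul {R M : Type*} [CommRing R]
    [AddCommGroup M] [Module R M] (b : Basis (Fin 2) R M) (f : M [⋀^Fin 2]→ₗ[R] R)
    (A : M →ₗ[R] M) (x y : M) :
    f ![A x, y] + f ![x, A y] = LinearMap.trace R M A * f ![x, y] := by
  rw [f.eq_smul_basis_det b, LinearMap.trace_eq_matrix_trace R b]
  simp only [AlternatingMap.smul_apply, smul_eq_mul, Basis.det_apply, Matrix.det_fin_two,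
    Basis.toMatrix_apply, Matrix.trace_fin_two, ← LinearMap.toMatrix_mulVec_repr b b A,
    Matrix.mulVec, dotProduct, Fin.sum_univ_two, Matrix.cons_val_zero, Matrix.cons_val_one]
  ring

theorem AffineIndependent.linearIndependent_sub_fin_three {k V : Type*} [Ring k] [AddCommGroup V]
    [Module k V] {z₁ z₂ z₃ : V} (h : AffineIndependent k ![z₁, z₂, z₃]) :
    LinearIndependent k ![z₂ - z₁, z₃ - z₁] := by
  rw [affineIndependent_iff_linearIndependent_vsub k _ (0 : Fin 3),
    ← linearIndependent_equiv (finSuccAboveEquiv (0 : Fin 3))] at h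
  convert! h
  ext i
  fin_cases i <;> rfl

theorem affineSpan_pair_ne_top {k V P : Type*} [DivisionRing k] [AddCommGroup V] [Module k V]
    [AddTorsor V P] (h : 1 < finrank k V) (p q : P) : line[k, p, q] ≠ ⊤ := by
  intro htop
  have hcol := collinear_pair k p q
  rw [collinear_iff_finrank_le_one, ← direction_affineSpan, htop, AffineSubspace.direction_top,
    finrank_top] at hcol
  omega

section ConvexHullZeroPair

variable {V : Type*} [AddCommGroup V] [Module ℝ V]

theorem convexHull_zero_pair_eq (u w : V) :
    convexHull ℝ {0, u, w} = {x | ∃ s t : ℝ, 0 ≤ s ∧ 0 ≤ t ∧ s + t ≤ 1 ∧ s • u + t • w = x} := by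
  refine subset_antisymm (convexHull_min ?_ ?_) ?_
  · rintro x (rfl | rfl | rfl)
    · exact ⟨0, 0, le_rfl, le_rfl, by norm_num, by simp⟩
    · exact ⟨1, 0, zero_le_one, le_rfl, by norm_num, by simp⟩
    · exact ⟨0, 1, le_rfl, zero_le_one, by norm_num, by simp⟩
  · rintro _ ⟨s₁, t₁, hs₁, ht₁, h₁, rfl⟩ _ ⟨s₂, t₂, hs₂, ht₂, h₂, rfl⟩ a b ha hb hab
    exact ⟨a * s₁ + b * s₂, a * t₁ + b * t₂, by positivity, by positivity, by nlinarith,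
      by module⟩
  · rintro _ ⟨s, t, hs, ht, hst, rfl⟩
    have h := (convex_convexHull ℝ ({0, u, w} : Set V)).sum_mem (t := Finset.univ)
      (w := ![1 - s - t, s, t]) (z := ![0, u, w])
      (fun i _ => by fin_cases i <;> simp only [Fin.reduceFinMk, Matrix.cons_val] <;> linarith)
      (by simp only [Fin.sum_univ_three, Matrix.cons_val]; ring)
      (fun i _ => subset_convexHull ℝ _ (by fin_cases i <;> simp))
    simpa [Fin.sum_univ_three] using h

theorem parallelepiped_pair_eq_union (u w : V) :
    parallelepiped ![u, w]
      = convexHull ℝ {0, u, w} ∪ (fun x => u + w - x) ⁻¹' convexHull ℝ {0, u, w} := by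
  ext x
  simp only [mem_parallelepiped_iff, convexHull_zero_pair_eq, mem_union, mem_preimage,
    mem_ofPred_eq, mem_Icc, Pi.le_def, Fin.forall_fin_two, Fin.sum_univ_two, Pi.zero_apply,
    Pi.one_apply, Matrix.cons_val_zero, Matrix.cons_val_one]
  constructor
  · rintro ⟨t, ⟨⟨h0, h1⟩, h0', h1'⟩, rfl⟩
    rcases le_total (t 0 + t 1) 1 with h | h
    · exact Or.inl ⟨t 0, t 1, h0, h1, h, rfl⟩
    · exact Or.inr ⟨1 - t 0, 1 - t 1, by linarith, by linarith, by linarith, by module⟩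
  · rintro (⟨s, t, hs, ht, hst, rfl⟩ | ⟨s, t, hs, ht, hst, h⟩)
    · exact ⟨![s, t], ⟨⟨hs, ht⟩, (by linarith : s ≤ 1), (by linarith : t ≤ 1)⟩, rfl⟩
    · refine ⟨![1 - s, 1 - t], ⟨⟨(by linarith : 0 ≤ 1 - s), (by linarith : 0 ≤ 1 - t)⟩,
        (by linarith : 1 - s ≤ 1), (by linarith : 1 - t ≤ 1)⟩, ?_⟩
      rw [eq_sub_iff_add_eq, add_comm, ← eq_sub_iff_add_eq] at h
      simp only [h, Matrix.cons_val_zero, Matrix.cons_val_one]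
      module

theorem convexHull_zero_pair_inter_preimage_subset_line (u w : V) :
    convexHull ℝ {0, u, w} ∩ (fun x => u + w - x) ⁻¹' convexHull ℝ {0, u, w}
      ⊆ line[ℝ, u, w] := by
  rintro _ ⟨hx, hx'⟩
  rw [mem_preimage, convexHull_zero_pair_eq] at hx'
  rw [convexHull_zero_pair_eq] at hx
  obtain ⟨s, t, -, -, hst, rfl⟩ := hx
  obtain ⟨s', t', -, -, hst', h⟩ := hx'
  suffices ∃ r : ℝ, s • u + t • w = AffineMap.lineMap u w r by
    obtain ⟨r, hr⟩ := this
    exact hr ▸ AffineMap.lineMap_mem_affineSpan_pair r u w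
  simp only [AffineMap.lineMap_apply_module]
  rcases hst.eq_or_lt with hst | hst
  · exact ⟨t, by rw [← hst]; module⟩
  -- the two representations have coefficient sums `s + t < 1` and `2 - s' - t' ≥ 1`,
  -- so a suitable convex combination of them has coefficient sum one
  obtain ⟨c, hc⟩ : ∃ c : ℝ, c * (2 - s - t - s' - t') = 1 - s' - t' :=
    ⟨_, div_mul_cancel₀ _ (by linarith)⟩
  refine ⟨c * t + (1 - c) * (1 - t'), ?_⟩
  calc s • u + t • w = c • (s • u + t • w) + (1 - c) • (u + w - (s' • u + t' • w)) := by
        rw [h]; module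
    _ = (c * s + (1 - c) * (1 - s')) • u + (c * t + (1 - c) * (1 - t')) • w := by module
    _ = _ := by congr 2; linear_combination -hc

end ConvexHullZeroPair

namespace Orientation

variable {E : Type*} [NormedAddCommGroup E] [InnerProductSpace ℝ E] [Fact (finrank ℝ E = 2)]
  (o : Orientation ℝ E (Fin 2))

attribute [local instance] FiniteDimensional.of_fact_finrank_eq_two

local notation "ω" => o.areaForm

theorem areaForm_map_add_areaForm_map (A : E →ₗ[ℝ] E) (x y : E) :
    ω (A x) y + ω x (A y) = LinearMap.trace ℝ E A * ω x y := by
  simp only [areaForm_to_volumeForm]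
  exact o.volumeForm.apply_map_add_apply_map_eq_trace_mul
    (finBasisOfFinrankEq ℝ E Fact.out) A x y

theorem areaForm_sub_sub_rotate (z₁ z₂ z₃ : E) :
    ω (z₃ - z₂) (z₁ - z₂) = ω (z₂ - z₁) (z₃ - z₁) := by
  simp only [map_sub, LinearMap.sub_apply, areaForm_apply_self]
  rw [o.areaForm_swap z₂ z₃, o.areaForm_swap z₁ z₃]
  ring

theorem areaForm_ne_zero_of_linearIndependent {u w : E} (h : LinearIndependent ℝ ![u, w]) :
    ω u w ≠ 0 := by
  let b := o.finOrthonormalBasis two_pos Fact.out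
  rw [areaForm_to_volumeForm, o.volumeForm_robust b (o.finOrthonormalBasis_orientation _ _)]
  have hspan := h.span_eq_top_of_card_eq_finrank' (by simpa using (Fact.out : finrank ℝ E = 2).symm)
  exact (b.toBasis.is_basis_iff_det.1 ⟨h, hspan⟩).ne_zero

theorem exists_areaForm_pos {u w : E} (h : LinearIndependent ℝ ![u, w]) :
    ∃ o' : Orientation ℝ E (Fin 2), 0 < o'.areaForm u w := by
  let o₀ : Orientation ℝ E (Fin 2) := (finBasisOfFinrankEq ℝ E Fact.out).orientation
  rcases (o₀.areaForm_ne_zero_of_linearIndependent h).lt_or_gt with hneg | hpos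
  · exact ⟨-o₀, by simpa [areaForm_neg_orientation] using hneg⟩
  · exact ⟨o₀, hpos⟩

theorem areaForm_affineMap_boundary_sum (v : E →ᵃ[ℝ] E) (z₁ z₂ z₃ : E) :
    ω (v z₁) (z₃ - z₂) + ω (v z₂) (z₁ - z₃) + ω (v z₃) (z₂ - z₁)
      = -(LinearMap.trace ℝ E v.linear * ω (z₂ - z₁) (z₃ - z₁)) := by
  obtain ⟨u, rfl⟩ : ∃ u, z₂ = u + z₁ := ⟨z₂ - z₁, by abel⟩
  obtain ⟨w, rfl⟩ : ∃ w, z₃ = w + z₁ := ⟨z₃ - z₁, by abel⟩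
  have hv : ∀ a, v (a + z₁) = v.linear a + v z₁ := fun a => v.map_vadd z₁ a
  rw [hv, hv, ← o.areaForm_map_add_areaForm_map]
  simp only [add_sub_cancel_right, add_sub_add_right_eq_sub, map_add, map_sub,
    LinearMap.add_apply]
  rw [o.areaForm_swap u (v.linear w)]
  ring

theorem norm_mul_inner_eq_areaForm_of_outward {e w n : E} (hn : ‖n‖ = 1) (hperp : ⟪n, e⟫ = 0)
    (hout : ⟪n, w⟫ < 0) (hpos : 0 < ω e w) (x : E) : ‖e‖ * ⟪x, n⟫ = ω x e := by
  have key : ∀ y, ‖e‖ ^ 2 * ⟪n, y⟫ = ω e n * ω e y := fun y => by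
    have := o.inner_mul_inner_add_areaForm_mul_areaForm e n y
    rw [real_inner_comm n e, hperp] at this
    linarith
  have he : e ≠ 0 := by
    rintro rfl
    simp at hpos
  have hsq : ω e n ^ 2 = ‖e‖ ^ 2 := by
    have := key n
    rw [real_inner_self_eq_norm_sq, hn] at this
    nlinarith
  have hneg : ω e n < 0 := by
    have := key w
    have : 0 < ‖e‖ ^ 2 := by positivity
    nlinarith
  have hc : ω e n = -‖e‖ := by nlinarith [norm_nonneg e]
  apply mul_left_cancel₀ (norm_ne_zero_iff.2 he)
  rw [real_inner_comm, o.areaForm_swap x e]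
  linear_combination key x + ω e x * hc

variable [MeasurableSpace E] [BorelSpace E]

theorem volume_parallelepiped_pair (u w : E) :
    volume (parallelepiped ![u, w]) = ENNReal.ofReal |ω u w| := by
  rw [← o.measure_eq_volume, AlternatingMap.measure_parallelepiped, areaForm_to_volumeForm]

theorem volume_convexHull_zero_pair (u w : E) :
    volume (convexHull ℝ {0, u, w}) = ENNReal.ofReal (|ω u w| / 2) := by
  set T := convexHull ℝ ({0, u, w} : Set E)
  have hT : MeasurableSet T := ((toFinite _).isCompact_convexHull ℝ).isClosed.measurableSet
  have hreflect := Measure.measurePreserving_sub_left volume (u + w)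
  have hnull : volume (T ∩ (fun x => u + w - x) ⁻¹' T) = 0 :=
    measure_mono_null (convexHull_zero_pair_inter_preimage_subset_line u w)
      (Measure.addHaar_affineSubspace _ _
        (affineSpan_pair_ne_top ((Fact.out : finrank ℝ E = 2) ▸ one_lt_two) u w))
  have h := measure_union_add_inter₀ (μ := volume) T
    (hT.preimage hreflect.measurable).nullMeasurableSet
  rw [← parallelepiped_pair_eq_union, hnull, add_zero,
    hreflect.measure_preimage hT.nullMeasurableSet, o.volume_parallelepiped_pair] at h
  rw [ENNReal.ofReal_div_of_pos two_pos, ENNReal.ofReal_ofNat,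
    ENNReal.eq_div_iff two_ne_zero ENNReal.ofNat_ne_top, h, two_mul]

theorem volume_convexHull_triangle (z₁ z₂ z₃ : E) :
    volume (convexHull ℝ {z₁, z₂, z₃}) = ENNReal.ofReal (|ω (z₂ - z₁) (z₃ - z₁)| / 2) := by
  have : ({z₁, z₂, z₃} : Set E) = z₁ +ᵥ ({0, z₂ - z₁, z₃ - z₁} : Set E) := by
    simp [vadd_set_insert]
  rw [this, convexHull_vadd, measure_vadd, o.volume_convexHull_zero_pair]

end Orientation

/-- For a nondegenerate triangle `T = conv{z₁,z₂,z₃} ⊂ ℝ²` with edge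
lengths `ℓᵢ` and outward unit normals `nᵢ`, and an affine map `v : ℝ² → ℝ²` with linear
part `A`, one has `∫_T div v dx = -(1/2) ∑ᵢ ℓᵢ (v(zᵢ) · nᵢ)`; equivalently
`area(T) * trace A = -(1/2) ∑ᵢ ℓᵢ (v(zᵢ) · nᵢ)`. -/
theorem integral_div_affine_eq_boundary_sum
    (z₁ z₂ z₃ n₁ n₂ n₃ : EuclideanSpace ℝ (Fin 2))
    (hindep : AffineIndependent ℝ ![z₁, z₂, z₃])
    (hn₁norm : ‖n₁‖ = 1) (hn₁perp : ⟪n₁, z₃ - z₂⟫ = 0) (hn₁out : ⟪n₁, z₁ - z₂⟫ < 0)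
    (hn₂norm : ‖n₂‖ = 1) (hn₂perp : ⟪n₂, z₁ - z₃⟫ = 0) (hn₂out : ⟪n₂, z₂ - z₃⟫ < 0)
    (hn₃norm : ‖n₃‖ = 1) (hn₃perp : ⟪n₃, z₂ - z₁⟫ = 0) (hn₃out : ⟪n₃, z₃ - z₁⟫ < 0)
    (v : EuclideanSpace ℝ (Fin 2) →ᵃ[ℝ] EuclideanSpace ℝ (Fin 2)) :
    (∫ _x in convexHull ℝ ({z₁, z₂, z₃} : Set (EuclideanSpace ℝ (Fin 2))),
        LinearMap.trace ℝ (EuclideanSpace ℝ (Fin 2)) v.linear ∂volume)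
      = -(1/2) * (‖z₃ - z₂‖ * ⟪v z₁, n₁⟫ + ‖z₁ - z₃‖ * ⟪v z₂, n₂⟫ + ‖z₂ - z₁‖ * ⟪v z₃, n₃⟫) ∧
    (volume (convexHull ℝ ({z₁, z₂, z₃} : Set (EuclideanSpace ℝ (Fin 2))))).toReal
        * LinearMap.trace ℝ (EuclideanSpace ℝ (Fin 2)) v.linear
      = -(1/2) * (‖z₃ - z₂‖ * ⟪v z₁, n₁⟫ + ‖z₁ - z₃‖ * ⟪v z₂, n₂⟫ + ‖z₂ - z₁‖ * ⟪v z₃, n₃⟫) := by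
  obtain ⟨o, hpos⟩ := Orientation.exists_areaForm_pos hindep.linearIndependent_sub_fin_three
  have hpos₁ : 0 < o.areaForm (z₃ - z₂) (z₁ - z₂) := o.areaForm_sub_sub_rotate z₁ z₂ z₃ ▸ hpos
  have hpos₂ : 0 < o.areaForm (z₁ - z₃) (z₂ - z₃) :=
    o.areaForm_sub_sub_rotate z₂ z₃ z₁ ▸ hpos₁
  have hsum := o.areaForm_affineMap_boundary_sum v z₁ z₂ z₃
  rw [← o.norm_mul_inner_eq_areaForm_of_outward hn₁norm hn₁perp hn₁out hpos₁,
    ← o.norm_mul_inner_eq_areaForm_of_outward hn₂norm hn₂perp hn₂out hpos₂,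
    ← o.norm_mul_inner_eq_areaForm_of_outward hn₃norm hn₃perp hn₃out hpos] at hsum
  have harea : (volume (convexHull ℝ ({z₁, z₂, z₃} : Set (EuclideanSpace ℝ (Fin 2))))).toReal
      = o.areaForm (z₂ - z₁) (z₃ - z₁) / 2 := by
    rw [o.volume_convexHull_triangle, ENNReal.toReal_ofReal (by positivity), abs_of_pos hpos]
  rw [setIntegral_const, smul_eq_mul, measureReal_def, and_self, harea]
  linear_combination hsum / 2
end

section
/- Let z₁ ≠ z₂ ∈ ℝ², let z_s = (1−t) z₁ + t z₂ for some t ∈ (0,1), and let z_c ∈ ℝ² not lie on the line through z₁ and z₂. Set T₁ = conv{z₁, z_s, z_c} and T₂ = conv{z_s, z₂, z_c}, and let n be a unit vector normal to z₂ − z₁. Let v : T₁ ∪ T₂ → ℝ² be continuous such that v restricted to each Tᵢ is affine with div v = 0 on each Tᵢ. If v(z₁) = v(z₂) = 0 and ∫_{[z₁,z₂]} v · n ds = 0, then v(z_s) = 0; consequently v vanishes identically on the segment [z₁, z₂]. (Hence the trace on [z₁, z₂] of such a piecewise affine divergence-free field is uniquely determined by the values v(z₁), v(z₂) and the normal moment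 ∫_{[z₁,z₂]} v · n ds.) -/
open scoped RealInnerProductSpace
open MeasureTheory

/-- The normal moment `∫_e w · n ds` of `w` over the segment `e = [p, q]`,
computed via the arclength parametrization `t ↦ (1 - t) p + t q`, `ds = ‖q - p‖ dt`. -/
noncomputable def segInt (p q n : EuclideanSpace ℝ (Fin 2))
    (w : EuclideanSpace ℝ (Fin 2) → EuclideanSpace ℝ (Fin 2)) : ℝ :=
  ∫ t in (0:ℝ)..1, ⟪w ((1 - t) • p + t • q), n⟫ * ‖q - p‖

set_option maxHeartbeats 2000000 in
/-- Let `z_s = (1-t) z₁ + t z₂` with `t ∈ (0,1)` and let `z_c` be off the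
line through `z₁, z₂`.  If `v` is continuous on `T₁ ∪ T₂` (`T₁ = conv{z₁,z_s,z_c}`,
`T₂ = conv{z_s,z₂,z_c}`), affine and divergence-free on each `Tᵢ`, vanishes at `z₁, z₂`
and has vanishing normal moment over `[z₁, z₂]`, then `v(z_s) = 0` and `v` vanishes
identically on `[z₁, z₂]`. -/
theorem trace_determined_by_endpoint_values_and_normal_moment
    (z₁ z₂ z_s z_c n : EuclideanSpace ℝ (Fin 2)) (t : ℝ)
    (hz : z₁ ≠ z₂) (ht : t ∈ Set.Ioo (0:ℝ) 1)
    (hzs : z_s = (1 - t) • z₁ + t • z₂)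
    (hzc : z_c ∉ affineSpan ℝ ({z₁, z₂} : Set (EuclideanSpace ℝ (Fin 2))))
    (hn : ‖n‖ = 1) (hperp : ⟪n, z₂ - z₁⟫ = 0)
    (v : EuclideanSpace ℝ (Fin 2) → EuclideanSpace ℝ (Fin 2))
    (A₁ A₂ : EuclideanSpace ℝ (Fin 2) →ᵃ[ℝ] EuclideanSpace ℝ (Fin 2))
    (hcont : ContinuousOn v (convexHull ℝ ({z₁, z_s, z_c} : Set (EuclideanSpace ℝ (Fin 2))) ∪
      convexHull ℝ ({z_s, z₂, z_c} : Set (EuclideanSpace ℝ (Fin 2)))))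
    (hdiv₁ : LinearMap.trace ℝ (EuclideanSpace ℝ (Fin 2)) A₁.linear = 0)
    (hdiv₂ : LinearMap.trace ℝ (EuclideanSpace ℝ (Fin 2)) A₂.linear = 0)
    (hv₁ : ∀ x ∈ convexHull ℝ ({z₁, z_s, z_c} : Set (EuclideanSpace ℝ (Fin 2))), v x = A₁ x)
    (hv₂ : ∀ x ∈ convexHull ℝ ({z_s, z₂, z_c} : Set (EuclideanSpace ℝ (Fin 2))), v x = A₂ x)
    (hb₁ : v z₁ = 0) (hb₂ : v z₂ = 0)
    (hmom : segInt z₁ z₂ n v = 0) :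
    v z_s = 0 ∧ ∀ x ∈ segment ℝ z₁ z₂, v x = 0 := by
  obtain ⟨ht0, ht1⟩ := ht
  have ht0' : t ≠ 0 := ht0.ne'
  have ht1' : (1 : ℝ) - t ≠ 0 := by linarith
  -- memberships
  have hz₁m : z₁ ∈ convexHull ℝ ({z₁, z_s, z_c} : Set (EuclideanSpace ℝ (Fin 2))) :=
    subset_convexHull ℝ _ (by simp)
  have hzs₁ : z_s ∈ convexHull ℝ ({z₁, z_s, z_c} : Set (EuclideanSpace ℝ (Fin 2))) :=
    subset_convexHull ℝ _ (by simp)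
  have hzc₁ : z_c ∈ convexHull ℝ ({z₁, z_s, z_c} : Set (EuclideanSpace ℝ (Fin 2))) :=
    subset_convexHull ℝ _ (by simp)
  have hzs₂ : z_s ∈ convexHull ℝ ({z_s, z₂, z_c} : Set (EuclideanSpace ℝ (Fin 2))) :=
    subset_convexHull ℝ _ (by simp)
  have hz₂m : z₂ ∈ convexHull ℝ ({z_s, z₂, z_c} : Set (EuclideanSpace ℝ (Fin 2))) :=
    subset_convexHull ℝ _ (by simp)
  have hzc₂ : z_c ∈ convexHull ℝ ({z_s, z₂, z_c} : Set (EuclideanSpace ℝ (Fin 2))) :=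
    subset_convexHull ℝ _ (by simp)
  set w := v z_s with hw
  have hA₁z₁ : A₁ z₁ = 0 := by rw [← hv₁ z₁ hz₁m]; exact hb₁
  have hA₂z₂ : A₂ z₂ = 0 := by rw [← hv₂ z₂ hz₂m]; exact hb₂
  have hA₁zs : A₁ z_s = w := (hv₁ z_s hzs₁).symm
  have hA₂zs : A₂ z_s = w := (hv₂ z_s hzs₂).symm
  have hAc : A₁ z_c = A₂ z_c := by rw [← hv₁ z_c hzc₁, ← hv₂ z_c hzc₂]
  set e : EuclideanSpace ℝ (Fin 2) := z₂ - z₁ with he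
  set d : EuclideanSpace ℝ (Fin 2) := z_c - z_s with hd
  have hene : e ≠ 0 := sub_ne_zero.mpr hz.symm
  -- values of the linear parts on e
  have hA₁e : A₁.linear e = t⁻¹ • w := by
    have h1 : A₁.linear (z_s - z₁) = w := by
      have := A₁.linearMap_vsub z_s z₁
      simpa [hA₁zs, hA₁z₁] using this
    have h2 : z_s - z₁ = t • e := by rw [hzs, he]; module
    rw [h2, _root_.map_smul] at h1
    rw [← h1, smul_smul, inv_mul_cancel₀ ht0', one_smul]
  have hA₂e : A₂.linear e = (-(1 - t)⁻¹) • w := by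
    have h1 : A₂.linear (z₂ - z_s) = -w := by
      have := A₂.linearMap_vsub z₂ z_s
      simpa [hA₂zs, hA₂z₂] using this
    have h2 : z₂ - z_s = (1 - t) • e := by rw [hzs, he]; module
    rw [h2, _root_.map_smul] at h1
    have := congrArg (fun x => (1 - t)⁻¹ • x) h1
    simp only [smul_smul, inv_mul_cancel₀ ht1', one_smul] at this
    rw [this]; module
  set F : EuclideanSpace ℝ (Fin 2) →ₗ[ℝ] EuclideanSpace ℝ (Fin 2) :=
    A₁.linear - A₂.linear with hF
  have hFe : F e = (t⁻¹ + (1 - t)⁻¹) • w := by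
    simp only [hF, LinearMap.sub_apply, hA₁e, hA₂e]; module
  have hFd : F d = 0 := by
    simp only [hF, LinearMap.sub_apply, hd]
    have h1 : A₁.linear (z_c - z_s) = A₁ z_c - A₁ z_s := A₁.linearMap_vsub z_c z_s
    have h2 : A₂.linear (z_c - z_s) = A₂ z_c - A₂ z_s := A₂.linearMap_vsub z_c z_s
    rw [h1, h2, hAc, hA₁zs, hA₂zs]
    abel
  have hFtr : LinearMap.trace ℝ (EuclideanSpace ℝ (Fin 2)) F = 0 := by
    rw [hF, map_sub, hdiv₁, hdiv₂, sub_zero]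
  -- `e, d` are linearly independent
  have hli : LinearIndependent ℝ ![e, d] := by
    rw [LinearIndependent.pair_iff]
    intro a b hab
    by_cases hb : b = 0
    · subst hb
      simp only [zero_smul, add_zero, smul_eq_zero] at hab
      exact ⟨hab.resolve_right hene, rfl⟩
    · exfalso
      apply hzc
      have hd' : d = (-(a / b)) • e := by
        have h' : b • d = -(a • e) := by
          rw [eq_neg_iff_add_eq_zero, add_comm]; exact hab
        calc d = b⁻¹ • (b • d) := by rw [smul_smul, inv_mul_cancel₀ hb, one_smul]
          _ = (-(a / b)) • e := by rw [h']; rw [div_eq_inv_mul]; module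
      have : z_c = AffineMap.lineMap z₁ z₂ (t - a / b) := by
        rw [AffineMap.lineMap_apply_module]
        have hzc' : z_c = z_s + d := by rw [hd]; abel
        rw [hzc', hd', hzs, he]; module
      rw [this]
      exact AffineMap.lineMap_mem_affineSpan_pair _ _ _
  have hcard : Fintype.card (Fin 2) = Module.finrank ℝ (EuclideanSpace ℝ (Fin 2)) := by simp
  set b := basisOfLinearIndependentOfCardEqFinrank hli hcard with hbb
  have hb0 : b 0 = e := by
    rw [hbb, coe_basisOfLinearIndependentOfCardEqFinrank]; rfl
  have hb1 : b 1 = d := by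
    rw [hbb, coe_basisOfLinearIndependentOfCardEqFinrank]; rfl
  -- trace computation gives: first coordinate of w vanishes
  have htrace : (t⁻¹ + (1 - t)⁻¹) * b.repr w 0 = 0 := by
    have h := hFtr
    rw [LinearMap.trace_eq_matrix_trace ℝ b, Matrix.trace, Fin.sum_univ_two] at h
    simp only [Matrix.diag_apply, LinearMap.toMatrix_apply, hb0, hb1, hFe, hFd,
      _root_.map_smul, map_zero, Finsupp.coe_zero, Pi.zero_apply, Finsupp.coe_smul,
      Pi.smul_apply, smul_eq_mul, add_zero, Finsupp.smul_apply] at h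
    exact h
  have hcoef : (0:ℝ) < t⁻¹ + (1 - t)⁻¹ :=
    add_pos (inv_pos.mpr ht0) (inv_pos.mpr (by linarith))
  have hrw0 : b.repr w 0 = 0 := by
    rcases mul_eq_zero.mp htrace with h | h
    · exact absurd h hcoef.ne'
    · exact h
  have hwd : w = b.repr w 1 • d := by
    have hs := b.sum_repr w
    rw [Fin.sum_univ_two, hb0, hb1, hrw0, zero_smul, zero_add] at hs
    exact hs.symm
  -- values of v along the segment
  have hval : ∀ u : ℝ, 0 ≤ u → u ≤ 1 →
      v ((1 - u) • z₁ + u • z₂) = (min (u / t) ((1 - u) / (1 - t))) • w := by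
    intro u h0 h1
    by_cases hut : u ≤ t
    · have hmin : min (u / t) ((1 - u) / (1 - t)) = u / t := by
        apply min_eq_left
        rw [div_le_div_iff₀ ht0 (by linarith)]
        nlinarith
      have hpt : (1 - u) • z₁ + u • z₂ = AffineMap.lineMap z₁ z_s (u / t) := by
        rw [AffineMap.lineMap_apply_module, hzs]
        match_scalars <;> (field_simp; try ring)
      have hmem : (1 - u) • z₁ + u • z₂ ∈
          convexHull ℝ ({z₁, z_s, z_c} : Set (EuclideanSpace ℝ (Fin 2))) := by
        rw [hpt, AffineMap.lineMap_apply_module]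
        apply (convex_convexHull ℝ _).segment_subset hz₁m hzs₁
        exact ⟨1 - u / t, u / t, by
          have : u / t ≤ 1 := (div_le_one ht0).mpr hut
          linarith, by positivity, by ring, rfl⟩
      rw [hv₁ _ hmem, hpt, AffineMap.apply_lineMap, hA₁z₁, hA₁zs, hmin,
        AffineMap.lineMap_apply_module]
      simp
    · push_neg at hut
      have hmin : min (u / t) ((1 - u) / (1 - t)) = (1 - u) / (1 - t) := by
        apply min_eq_right
        rw [div_le_div_iff₀ (by linarith) ht0]
        nlinarith
      have hpt : (1 - u) • z₁ + u • z₂ = AffineMap.lineMap z_s z₂ ((u - t) / (1 - t)) := by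
        rw [AffineMap.lineMap_apply_module, hzs]
        match_scalars <;> field_simp <;> ring
      have hmem : (1 - u) • z₁ + u • z₂ ∈
          convexHull ℝ ({z_s, z₂, z_c} : Set (EuclideanSpace ℝ (Fin 2))) := by
        rw [hpt, AffineMap.lineMap_apply_module]
        apply (convex_convexHull ℝ _).segment_subset hzs₂ hz₂m
        refine ⟨1 - (u - t) / (1 - t), (u - t) / (1 - t), by
          have : (u - t) / (1 - t) ≤ 1 := by
            rw [div_le_one (by linarith)]; linarith
          linarith, div_nonneg (by linarith) (by linarith), by ring, rfl⟩
      rw [hv₂ _ hmem, hpt, AffineMap.apply_lineMap, hA₂z₂, hA₂zs,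
        AffineMap.lineMap_apply_module, hmin]
      match_scalars <;> (field_simp; try ring)
  -- compute the moment integral
  have hC : ⟪w, n⟫ * ‖z₂ - z₁‖ = 0 := by
    set C : ℝ := ⟪w, n⟫ * ‖z₂ - z₁‖ with hCdef
    have hgc : Continuous (fun u : ℝ => (min (u / t) ((1 - u) / (1 - t))) * C) := by
      fun_prop
    have heq : segInt z₁ z₂ n v =
        ∫ u in (0:ℝ)..1, (min (u / t) ((1 - u) / (1 - t))) * C := by
      unfold segInt
      apply intervalIntegral.integral_congr
      intro u hu
      dsimp only
      rw [Set.uIcc_of_le (by norm_num)] at hu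
      rw [hval u hu.1 hu.2, real_inner_smul_left]
      ring
    have hsplit : (∫ u in (0:ℝ)..1, (min (u / t) ((1 - u) / (1 - t))) * C) =
        (∫ u in (0:ℝ)..t, (min (u / t) ((1 - u) / (1 - t))) * C) +
        ∫ u in t..(1:ℝ), (min (u / t) ((1 - u) / (1 - t))) * C :=
      (intervalIntegral.integral_add_adjacent_intervals
        (hgc.intervalIntegrable 0 t) (hgc.intervalIntegrable t 1)).symm
    have hI1 : (∫ u in (0:ℝ)..t, (min (u / t) ((1 - u) / (1 - t))) * C) = t * C / 2 := by
      have : (∫ u in (0:ℝ)..t, (min (u / t) ((1 - u) / (1 - t))) * C) =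
          ∫ u in (0:ℝ)..t, u * (C / t) := by
        apply intervalIntegral.integral_congr
        intro u hu
        dsimp only
        rw [Set.uIcc_of_le ht0.le] at hu
        have hmin : min (u / t) ((1 - u) / (1 - t)) = u / t := by
          apply min_eq_left
          rw [div_le_div_iff₀ ht0 (by linarith)]
          nlinarith [hu.1, hu.2]
        rw [hmin]; field_simp; try ring
      rw [this, intervalIntegral.integral_mul_const, integral_id]
      field_simp; ring
    have hI2 : (∫ u in t..(1:ℝ), (min (u / t) ((1 - u) / (1 - t))) * C) =
        (1 - t) * C / 2 := by
      have : (∫ u in t..(1:ℝ), (min (u / t) ((1 - u) / (1 - t))) * C) =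
          ∫ u in t..(1:ℝ), (1 - u) * (C / (1 - t)) := by
        apply intervalIntegral.integral_congr
        intro u hu
        dsimp only
        rw [Set.uIcc_of_le ht1.le] at hu
        have hmin : min (u / t) ((1 - u) / (1 - t)) = (1 - u) / (1 - t) := by
          apply min_eq_right
          rw [div_le_div_iff₀ (by linarith) ht0]
          nlinarith [hu.1, hu.2]
        rw [hmin]; field_simp; try ring
      rw [this, intervalIntegral.integral_mul_const]
      have : (∫ u in t..(1:ℝ), (1 - u)) = (1 - t) ^ 2 / 2 := by
        rw [intervalIntegral.integral_sub intervalIntegrable_const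
          intervalIntegral.intervalIntegrable_id, integral_id,
          intervalIntegral.integral_const]
        simp; ring
      rw [this]; field_simp
    have : C / 2 = 0 := by
      rw [hmom] at heq
      rw [hsplit, hI1, hI2] at heq
      linarith [heq]
    linarith
  have hwn : ⟪w, n⟫ = 0 := by
    rcases mul_eq_zero.mp hC with h | h
    · exact h
    · exact absurd h (norm_ne_zero_iff.mpr (sub_ne_zero.mpr hz.symm))
  -- conclude w = 0
  have hdn : ⟪d, n⟫ ≠ 0 := by
    intro hdn0
    have hen : ⟪e, n⟫ = 0 := by rw [real_inner_comm]; exact hperp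
    have hnrep := b.sum_repr n
    rw [Fin.sum_univ_two, hb0, hb1] at hnrep
    have : ⟪n, n⟫ = 0 := by
      nth_rewrite 2 [← hnrep]
      rw [inner_add_right, real_inner_smul_right, real_inner_smul_right, hperp,
        real_inner_comm d n, hdn0]
      ring
    have : n = 0 := by
      rwa [inner_self_eq_zero] at this
    rw [this] at hn
    simp at hn
  have hw0 : w = 0 := by
    rw [hwd] at hwn
    rw [real_inner_smul_left] at hwn
    rcases mul_eq_zero.mp hwn with h | h
    · rw [hwd, h, zero_smul]
    · exact absurd h hdn
  refine ⟨hw0, ?_⟩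
  intro x hx
  obtain ⟨a, c, ha, hc, hac, hx⟩ := hx
  have hxe : x = (1 - c) • z₁ + c • z₂ := by
    rw [← hx]
    congr 1
    rw [show (1:ℝ) - c = a by linarith]
  rw [hxe, hval c hc (by linarith), hw0, smul_zero]
end

section
/- Let z ∈ ℝ² and let L₁ and L₂ be two distinct lines through z. Let A₁, A₂, A₃, A₄ : ℝ² → ℝ² be affine maps such that A₁ = A₂ on L₁, A₂ = A₃ on L₂, A₃ = A₄ on L₁, and A₄ = A₁ on L₂. Then div A₁ − div A₂ + div A₃ − div A₄ = 0. (This is the interior singular-vertex relation: if a continuous piecewise affine vector field on four triangles surrounding z, whose edges at z all lie on the two lines L₁ and L₂, is given by Aᵢ on the i-th triangle in cyclic order, then the alternating sum of the divergences of v around z vanishes.) -/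
/-!
Agreement of two affine maps on a line through `z` with direction `d` forces their linear parts
to agree on `d`. Hence the linear map `B₁ - B₂ + B₃ - B₄` built from the linear parts kills both
`d₁` and `d₂`; these span `ℝ²`, so it is zero, and so is its trace.
-/

theorem AffineMap.linear_apply_eq_of_eqOn_line {k V W : Type*} [Ring k] [AddCommGroup V]
    [Module k V] [AddCommGroup W] [Module k W] {f g : V →ᵃ[k] W} {z d : V}
    (h : ∀ t : k, f (z + t • d) = g (z + t • d)) : f.linear d = g.linear d := by
  have h₀ : f z = g z := by simpa using h 0
  have h₁ : f (z + d) = g (z + d) := by simpa using h 1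
  calc f.linear d = f (z + d) - f z := by simpa using f.linearMap_vsub (z + d) z
    _ = g (z + d) - g z := by rw [h₀, h₁]
    _ = g.linear d := by simpa using (g.linearMap_vsub (z + d) z).symm

/-- **interior singular-vertex relation.** Let `L₁, L₂` be two distinct lines
through `z`, given by linearly independent direction vectors `d₁, d₂`.  If the affine maps
`A₁, A₂, A₃, A₄ : ℝ² → ℝ²` satisfy `A₁ = A₂` on `L₁`, `A₂ = A₃` on `L₂`, `A₃ = A₄` on `L₁`
and `A₄ = A₁` on `L₂`, then the alternating sum of their divergences vanishes:
`div A₁ - div A₂ + div A₃ - div A₄ = 0`. -/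
theorem interior_singular_vertex_relation
    (z d₁ d₂ : EuclideanSpace ℝ (Fin 2))
    (hd : LinearIndependent ℝ ![d₁, d₂])
    (A₁ A₂ A₃ A₄ : EuclideanSpace ℝ (Fin 2) →ᵃ[ℝ] EuclideanSpace ℝ (Fin 2))
    (h12 : ∀ t : ℝ, A₁ (z + t • d₁) = A₂ (z + t • d₁))
    (h23 : ∀ t : ℝ, A₂ (z + t • d₂) = A₃ (z + t • d₂))
    (h34 : ∀ t : ℝ, A₃ (z + t • d₁) = A₄ (z + t • d₁))
    (h41 : ∀ t : ℝ, A₄ (z + t • d₂) = A₁ (z + t • d₂)) :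
    LinearMap.trace ℝ (EuclideanSpace ℝ (Fin 2)) A₁.linear
      - LinearMap.trace ℝ (EuclideanSpace ℝ (Fin 2)) A₂.linear
      + LinearMap.trace ℝ (EuclideanSpace ℝ (Fin 2)) A₃.linear
      - LinearMap.trace ℝ (EuclideanSpace ℝ (Fin 2)) A₄.linear = 0 := by
  have e₁₂ := AffineMap.linear_apply_eq_of_eqOn_line h12
  have e₂₃ := AffineMap.linear_apply_eq_of_eqOn_line h23
  have e₃₄ := AffineMap.linear_apply_eq_of_eqOn_line h34
  have e₄₁ := AffineMap.linear_apply_eq_of_eqOn_line h41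
  have hspan := hd.span_eq_top_of_card_eq_finrank (by simp)
  have hB : A₁.linear - A₂.linear + A₃.linear - A₄.linear = 0 :=
    LinearMap.ext_on_range hspan fun i => by
      fin_cases i
      · simp [e₁₂, e₃₄]
      · simp [e₂₃, ← e₄₁]
  simpa using congrArg (LinearMap.trace ℝ (EuclideanSpace ℝ (Fin 2))) hB
end

section
/- Let a₁, a₂, a₃ ∈ ℝ² be distinct collinear points with a₂ strictly between a₁ and a₃, and let z_c ∈ ℝ² not lie on the line through them. Set T₁ = conv{a₁, a₂, z_c} and T₂ = conv{a₂, a₃, z_c}, and let n be a unit vector normal to the line through a₁, a₂, a₃. Let v : T₁ ∪ T₂ → ℝ² be continuous with v affine on each Tᵢ, v(a₁) = v(a₂) = v(a₃) = 0, and div v = 0 on T₂. Then v(z_c) · n = 0 and also div v = 0 on T₁. -/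
open scoped RealInnerProductSpace

private lemma trace_onb2 (b : OrthonormalBasis (Fin 2) ℝ (EuclideanSpace ℝ (Fin 2)))
    (L : EuclideanSpace ℝ (Fin 2) →ₗ[ℝ] EuclideanSpace ℝ (Fin 2)) :
    LinearMap.trace ℝ _ L = ⟪b 0, L (b 0)⟫ + ⟪b 1, L (b 1)⟫ := by
  rw [LinearMap.trace_eq_matrix_trace ℝ b.toBasis L, Matrix.trace]
  simp [Matrix.diag, LinearMap.toMatrix_apply, Fin.sum_univ_two,
    OrthonormalBasis.coe_toBasis_repr_apply, OrthonormalBasis.repr_apply_apply]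

/-- Let `a₁, a₂, a₃` be distinct collinear points with `a₂` strictly
between `a₁` and `a₃`, and let `z_c` be off their line.  If `v` is affine on each of
`T₁ = conv{a₁, a₂, z_c}` and `T₂ = conv{a₂, a₃, z_c}`, vanishes at `a₁, a₂, a₃`, and is
divergence-free on `T₂`, then `v(z_c) · n = 0` (where `n` is a unit normal to the line)
and `v` is divergence-free on `T₁` as well. -/
theorem divfree_propagates_across_collinear_edge
    (a₁ a₂ a₃ z_c n : EuclideanSpace ℝ (Fin 2))
    (h12 : a₁ ≠ a₂) (h23 : a₂ ≠ a₃) (h13 : a₁ ≠ a₃)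
    (hbetween : a₂ ∈ openSegment ℝ a₁ a₃)
    (hzc : z_c ∉ affineSpan ℝ ({a₁, a₃} : Set (EuclideanSpace ℝ (Fin 2))))
    (hn : ‖n‖ = 1) (hperp : ⟪n, a₃ - a₁⟫ = 0)
    (v : EuclideanSpace ℝ (Fin 2) → EuclideanSpace ℝ (Fin 2))
    (A₁ A₂ : EuclideanSpace ℝ (Fin 2) →ᵃ[ℝ] EuclideanSpace ℝ (Fin 2))
    (hv₁ : ∀ x ∈ convexHull ℝ ({a₁, a₂, z_c} : Set (EuclideanSpace ℝ (Fin 2))), v x = A₁ x)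
    (hv₂ : ∀ x ∈ convexHull ℝ ({a₂, a₃, z_c} : Set (EuclideanSpace ℝ (Fin 2))), v x = A₂ x)
    (hb₁ : v a₁ = 0) (hb₂ : v a₂ = 0) (hb₃ : v a₃ = 0)
    (hdiv₂ : LinearMap.trace ℝ (EuclideanSpace ℝ (Fin 2)) A₂.linear = 0) :
    ⟪v z_c, n⟫ = 0 ∧ LinearMap.trace ℝ (EuclideanSpace ℝ (Fin 2)) A₁.linear = 0 := by
  obtain ⟨d, hd_def⟩ : ∃ d : EuclideanSpace ℝ (Fin 2), d = a₃ - a₁ := ⟨_, rfl⟩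
  have hd : d ≠ 0 := by rw [hd_def]; exact sub_ne_zero.mpr (Ne.symm h13)
  have hdn : ‖d‖ ≠ 0 := norm_ne_zero_iff.mpr hd
  obtain ⟨u, hu_def⟩ : ∃ u : EuclideanSpace ℝ (Fin 2), u = ‖d‖⁻¹ • d := ⟨_, rfl⟩
  have hnd : ⟪n, d⟫ = 0 := by rw [hd_def]; exact hperp
  have hun : ⟪u, n⟫ = 0 := by
    rw [hu_def, real_inner_smul_left, ← real_inner_comm d n, hnd, mul_zero]
  have hnu : ⟪n, u⟫ = 0 := by rw [real_inner_comm]; exact hun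
  have hon : Orthonormal ℝ ![u, n] := by
    constructor
    · intro i
      fin_cases i
      · simpa [hu_def, norm_smul, abs_of_nonneg (inv_nonneg.mpr (norm_nonneg d))]
          using inv_mul_cancel₀ hdn
      · simpa using hn
    · intro i j hij
      fin_cases i <;> fin_cases j
      · exact absurd rfl hij
      · simpa using hun
      · simpa using hnu
      · exact absurd rfl hij
  have hcard : Fintype.card (Fin 2) = Module.finrank ℝ (EuclideanSpace ℝ (Fin 2)) := by
    simp [finrank_euclideanSpace]
  let B := basisOfOrthonormalOfCardEqFinrank hon hcard
  have hB : ⇑B = ![u, n] := coe_basisOfOrthonormalOfCardEqFinrank hon hcard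
  let b : OrthonormalBasis (Fin 2) ℝ (EuclideanSpace ℝ (Fin 2)) :=
    OrthonormalBasis.mk hon (by rw [← hB]; exact B.span_eq.ge)
  have hb : ⇑b = ![u, n] := OrthonormalBasis.coe_mk hon _
  have hb0 : b 0 = u := by rw [hb]; rfl
  have hb1 : b 1 = n := by rw [hb]; rfl
  have hexp : ∀ x : EuclideanSpace ℝ (Fin 2), x = ⟪u, x⟫ • u + ⟪n, x⟫ • n := by
    intro x
    conv_lhs => rw [← b.sum_repr x]
    simp [Fin.sum_univ_two, OrthonormalBasis.repr_apply_apply, hb0, hb1]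
  have hA₁a₁ : A₁ a₁ = 0 := (hv₁ a₁ (subset_convexHull ℝ _ (by simp))).symm.trans hb₁
  have hA₁a₂ : A₁ a₂ = 0 := (hv₁ a₂ (subset_convexHull ℝ _ (by simp))).symm.trans hb₂
  have hA₂a₂ : A₂ a₂ = 0 := (hv₂ a₂ (subset_convexHull ℝ _ (by simp))).symm.trans hb₂
  have hA₂a₃ : A₂ a₃ = 0 := (hv₂ a₃ (subset_convexHull ℝ _ (by simp))).symm.trans hb₃
  have hAz : A₁ z_c = A₂ z_c :=
    (hv₁ z_c (subset_convexHull ℝ _ (by simp))).symm.trans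
      (hv₂ z_c (subset_convexHull ℝ _ (by simp)))
  obtain ⟨s, t, hs, ht, hst, ha₂⟩ := hbetween
  have ha₂d : a₂ - a₁ = t • d := by
    rw [← ha₂, hd_def]
    have : s = 1 - t := by linarith
    rw [this]; module
  have ha₃d : a₃ - a₂ = s • d := by
    rw [← ha₂, hd_def]
    have : s = 1 - t := by linarith
    rw [this]; module
  have key : ∀ (A : EuclideanSpace ℝ (Fin 2) →ᵃ[ℝ] EuclideanSpace ℝ (Fin 2)) (p q : _) (c : ℝ),
      A p = 0 → A q = 0 → q - p = c • d → c ≠ 0 → A.linear d = 0 := by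
    intro A p q c hp hq hpq hc
    have h1 : A.linear (q - p) = A q - A p := by
      have := A.linearMap_vsub q p
      simpa using this
    rw [hpq, hp, hq, sub_zero, map_smul] at h1
    exact (smul_eq_zero.mp h1).resolve_left hc
  have hA₁d : A₁.linear d = 0 := key A₁ a₁ a₂ t hA₁a₁ hA₁a₂ ha₂d (ne_of_gt ht)
  have hA₂d : A₂.linear d = 0 := key A₂ a₂ a₃ s hA₂a₂ hA₂a₃ ha₃d (ne_of_gt hs)
  have hA₁u : A₁.linear u = 0 := by rw [hu_def, map_smul, hA₁d, smul_zero]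
  have hA₂u : A₂.linear u = 0 := by rw [hu_def, map_smul, hA₂d, smul_zero]
  have htr₁ : LinearMap.trace ℝ (EuclideanSpace ℝ (Fin 2)) A₁.linear = ⟪n, A₁.linear n⟫ := by
    rw [trace_onb2 b, hb0, hb1, hA₁u, inner_zero_right, zero_add]
  have htr₂ : LinearMap.trace ℝ (EuclideanSpace ℝ (Fin 2)) A₂.linear = ⟪n, A₂.linear n⟫ := by
    rw [trace_onb2 b, hb0, hb1, hA₂u, inner_zero_right, zero_add]
  have hn2 : ⟪n, A₂.linear n⟫ = 0 := by rw [← htr₂]; exact hdiv₂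
  obtain ⟨β, hβ_def⟩ : ∃ β : ℝ, β = ⟪n, z_c - a₂⟫ := ⟨_, rfl⟩
  have hβ : β ≠ 0 := by
    intro h0
    apply hzc
    have ha₁mem : a₁ ∈ affineSpan ℝ ({a₁, a₃} : Set (EuclideanSpace ℝ (Fin 2))) :=
      subset_affineSpan ℝ _ (by simp)
    have ha₃mem : a₃ ∈ affineSpan ℝ ({a₁, a₃} : Set (EuclideanSpace ℝ (Fin 2))) :=
      subset_affineSpan ℝ _ (by simp)
    have hdmem : d ∈ (affineSpan ℝ ({a₁, a₃} : Set (EuclideanSpace ℝ (Fin 2)))).direction := by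
      have := AffineSubspace.vsub_mem_direction ha₃mem ha₁mem
      rw [hd_def]; simpa using this
    have ha₂mem : a₂ ∈ affineSpan ℝ ({a₁, a₃} : Set (EuclideanSpace ℝ (Fin 2))) := by
      have := AffineSubspace.vadd_mem_of_mem_direction
        (Submodule.smul_mem _ t hdmem) ha₁mem
      have heq : (t • d) +ᵥ a₁ = a₂ := by rw [vadd_eq_add, ← ha₂d]; abel
      rwa [heq] at this
    have hz : z_c = (⟪u, z_c - a₂⟫ • u) +ᵥ a₂ := by
      have h := hexp (z_c - a₂)
      rw [← hβ_def] at h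
      rw [h0, zero_smul, add_zero] at h
      rw [vadd_eq_add, ← h]; abel
    rw [hz]
    refine AffineSubspace.vadd_mem_of_mem_direction ?_ ha₂mem
    refine Submodule.smul_mem _ _ ?_
    rw [hu_def]
    exact Submodule.smul_mem _ _ hdmem
  have hval : ∀ A : EuclideanSpace ℝ (Fin 2) →ᵃ[ℝ] EuclideanSpace ℝ (Fin 2),
      A a₂ = 0 → A.linear u = 0 → A z_c = β • A.linear n := by
    intro A h2 hu
    have h1 : A.linear (z_c - a₂) = A z_c - A a₂ := by
      have := A.linearMap_vsub z_c a₂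
      simpa using this
    rw [h2, sub_zero] at h1
    rw [← h1]
    conv_lhs => rw [hexp (z_c - a₂)]
    rw [map_add, map_smul, map_smul, hu, smul_zero, zero_add, ← hβ_def]
  have hval₁ := hval A₁ hA₁a₂ hA₁u
  have hval₂ := hval A₂ hA₂a₂ hA₂u
  have hvz : v z_c = β • A₂.linear n := by
    rw [hv₂ z_c (subset_convexHull ℝ _ (by simp))]; exact hval₂
  constructor
  · rw [hvz, real_inner_smul_left, real_inner_comm, hn2, mul_zero]
  · rw [htr₁]
    have heq : A₁.linear n = A₂.linear n := by
      have h := hAz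
      rw [hval₁, hval₂] at h
      exact smul_right_injective _ hβ h
    rw [heq]; exact hn2
end

section
/- Let F : ℝ² → ℝ² be an invertible affine map, F(x̂) = J x̂ + b with J an invertible linear map. Given a differentiable map v̂ : ℝ² → ℝ², define its Piola transform v : ℝ² → ℝ² by v(x) = (1/|det J|) · J (v̂(F⁻¹(x))). Then the divergence is preserved up to the Jacobian factor: for every x̂ ∈ ℝ², (div v)(F(x̂)) = (1/|det J|) · (div v̂)(x̂). In particular, v̂ is divergence-free if and only if v is divergence-free. -/
open scoped RealInnerProductSpace

/-- The divergence of a map `w : ℝ² → ℝ²` at `x`: the trace of its Fréchet derivative. -/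
noncomputable def div2 (w : EuclideanSpace ℝ (Fin 2) → EuclideanSpace ℝ (Fin 2))
    (x : EuclideanSpace ℝ (Fin 2)) : ℝ :=
  LinearMap.trace ℝ (EuclideanSpace ℝ (Fin 2))
    (fderiv ℝ w x : EuclideanSpace ℝ (Fin 2) →ₗ[ℝ] EuclideanSpace ℝ (Fin 2))

/-!
The derivative of the Piola transform at `F x̂` is `|det J|⁻¹ • J ∘ Dv̂(x̂) ∘ J⁻¹`, and the trace
is invariant under conjugation by `J`. Composing with translations and continuous linear
equivalences commutes with `fderiv` everywhere, including where it takes the junk value `0`.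
-/

section Divergence

variable {𝕜 E : Type*} [NontriviallyNormedField 𝕜] [NormedAddCommGroup E] [NormedSpace 𝕜 E]

variable (𝕜) in
noncomputable def divergence (w : E → E) (x : E) : 𝕜 :=
  LinearMap.trace 𝕜 E (fderiv 𝕜 w x : E →ₗ[𝕜] E)

theorem divergence_const_smul (c : 𝕜) (w : E → E) (x : E) :
    divergence 𝕜 (c • w) x = c * divergence 𝕜 w x := by
  rw [divergence, fderiv_const_smul_field, Pi.smul_apply, ContinuousLinearMap.toLinearMap_smul,
    map_smul, smul_eq_mul, divergence]

theorem divergence_comp_sub_const (w : E → E) (b x : E) :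
    divergence 𝕜 (fun y => w (y - b)) x = divergence 𝕜 w (x - b) := by
  rw [divergence, fderiv_comp_sub, divergence]

theorem divergence_conj (e : E ≃L[𝕜] E) (w : E → E) (x : E) :
    divergence 𝕜 (e ∘ w ∘ e.symm) (e x) = divergence 𝕜 w x := by
  have hderiv : fderiv 𝕜 (e ∘ w ∘ e.symm) (e x) =
      (e : E →L[𝕜] E) ∘L fderiv 𝕜 w x ∘L (e.symm : E →L[𝕜] E) := by
    rw [e.comp_fderiv, e.symm.comp_right_fderiv, e.symm_apply_apply]
  rw [divergence, hderiv, divergence,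
    ← LinearMap.trace_conj' (fderiv 𝕜 w x : E →ₗ[𝕜] E) e.toLinearEquiv]
  rfl

theorem divergence_piola (e : E ≃L[𝕜] E) (c : 𝕜) (b : E) (w : E → E) (x : E) :
    divergence 𝕜 (fun y => c • e (w (e.symm (y - b)))) (e x + b) = c * divergence 𝕜 w x := by
  rw [← divergence_conj e w x, ← divergence_const_smul, ← add_sub_cancel_right (e x) b,
    ← divergence_comp_sub_const, add_sub_cancel_right]
  rfl

end Divergence

theorem piola_preserves_divergence_general
    (J : EuclideanSpace ℝ (Fin 2) →L[ℝ] EuclideanSpace ℝ (Fin 2))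
    (b : EuclideanSpace ℝ (Fin 2))
    (hJ : LinearMap.det (J : EuclideanSpace ℝ (Fin 2) →ₗ[ℝ] EuclideanSpace ℝ (Fin 2)) ≠ 0)
    (vhat v : EuclideanSpace ℝ (Fin 2) → EuclideanSpace ℝ (Fin 2))
    (hv : ∀ xhat, v (J xhat + b) =
      |LinearMap.det (J : EuclideanSpace ℝ (Fin 2) →ₗ[ℝ] EuclideanSpace ℝ (Fin 2))|⁻¹ •
        J (vhat xhat)) :
    (∀ xhat, div2 v (J xhat + b) =
      |LinearMap.det (J : EuclideanSpace ℝ (Fin 2) →ₗ[ℝ] EuclideanSpace ℝ (Fin 2))|⁻¹ *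
        div2 vhat xhat) ∧
    ((∀ xhat, div2 vhat xhat = 0) ↔ (∀ x, div2 v x = 0)) := by
  set c := |LinearMap.det (J : EuclideanSpace ℝ (Fin 2) →ₗ[ℝ] EuclideanSpace ℝ (Fin 2))|⁻¹
  have hc : c ≠ 0 := inv_ne_zero (abs_ne_zero.mpr hJ)
  let e := (LinearMap.equivOfDetNeZero _ hJ).toContinuousLinearEquiv
  have hJe (x) : J (e.symm (x - b)) + b = x := by
    change e (e.symm (x - b)) + b = x
    rw [e.apply_symm_apply, sub_add_cancel]
  have hv' : v = fun y => c • e (vhat (e.symm (y - b))) := by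
    funext y
    obtain ⟨xhat, rfl⟩ : ∃ xhat, J xhat + b = y := ⟨_, hJe y⟩
    rw [hv, add_sub_cancel_right, show J xhat = e xhat from rfl, e.symm_apply_apply]
    rfl
  have hdiv (xhat) : div2 v (J xhat + b) = c * div2 vhat xhat := by
    rw [hv']
    exact divergence_piola e c b vhat xhat
  refine ⟨hdiv, fun h x => ?_, fun h xhat => ?_⟩
  · rw [← hJe x, hdiv, h, mul_zero]
  · simpa [hc, hdiv] using h (J xhat + b)

/-- Let `F(x̂) = J x̂ + b` be an invertible affine map of the plane and
let `v` be the Piola transform `v(F(x̂)) = |det J|⁻¹ J (v̂(x̂))` of a differentiable map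
`v̂`.  Then `(div v)(F(x̂)) = |det J|⁻¹ (div v̂)(x̂)` for all `x̂`; in particular `v̂` is
divergence-free iff `v` is. -/
theorem piola_preserves_divergence
    (J : EuclideanSpace ℝ (Fin 2) →L[ℝ] EuclideanSpace ℝ (Fin 2))
    (b : EuclideanSpace ℝ (Fin 2))
    (hJ : LinearMap.det (J : EuclideanSpace ℝ (Fin 2) →ₗ[ℝ] EuclideanSpace ℝ (Fin 2)) ≠ 0)
    (vhat v : EuclideanSpace ℝ (Fin 2) → EuclideanSpace ℝ (Fin 2))
    (hdiff : Differentiable ℝ vhat)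
    (hv : ∀ xhat, v (J xhat + b) =
      |LinearMap.det (J : EuclideanSpace ℝ (Fin 2) →ₗ[ℝ] EuclideanSpace ℝ (Fin 2))|⁻¹ •
        J (vhat xhat)) :
    (∀ xhat, div2 v (J xhat + b) =
      |LinearMap.det (J : EuclideanSpace ℝ (Fin 2) →ₗ[ℝ] EuclideanSpace ℝ (Fin 2))|⁻¹ *
        div2 vhat xhat) ∧
    ((∀ xhat, div2 vhat xhat = 0) ↔ (∀ x, div2 v x = 0)) :=
  piola_preserves_divergence_general J b hJ vhat v hv
end

section
/- Let a, b, c, d ∈ ℝ² be such that T₁ = conv{a, b, c} and T₂ = conv{a, b, d} are nondegenerate triangles with c and d strictly on opposite sides of the line through a and b (so T₁ and T₂ share the edge [a, b]). Then the segment joining the incenter of T₁ to the incenter of T₂ intersects the open segment between a and b. -/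
/-!
Let `e = (1 - t) c + t d` be the point where `[c, d]` crosses the line `ab`, and write
`e = (1 - r) a + r b`. Weighting the two incenters by `(1 - t) P₁` and `t P₂`, where `Pᵢ` are
the perimeters, the `c`- and `d`-terms combine to `‖a - b‖ e`, so the weighted sum is a
combination of `a` and `b` alone. Its weights are positive by the strict triangle inequality
`‖e - b‖ < (1 - t) ‖c - b‖ + t ‖d - b‖` (and likewise at `a`), which is strict because `c - b`
and `d - b` do not point in the same direction. Hence the common barycentre lies both on the
segment between the incenters and on the open edge `(a, b)`.
-/

/-- The incenter of the triangle with vertices `p`, `q`, `r`: the barycentric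
combination `(ℓ_p p + ℓ_q q + ℓ_r r)/(ℓ_p + ℓ_q + ℓ_r)` where `ℓ_p = ‖q - r‖` is the
length of the edge opposite `p`, etc. -/
noncomputable def incenter (p q r : EuclideanSpace ℝ (Fin 2)) : EuclideanSpace ℝ (Fin 2) :=
  (‖q - r‖ + ‖r - p‖ + ‖p - q‖)⁻¹ • (‖q - r‖ • p + ‖r - p‖ • q + ‖p - q‖ • r)

open AffineMap

theorem exists_mem_segment_mem_openSegment_of_smul_add_smul_eq {𝕜 E : Type*} [Field 𝕜]
    [LinearOrder 𝕜] [IsStrictOrderedRing 𝕜] [AddCommGroup E] [Module 𝕜 E] {y z a b : E}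
    {s t u w : 𝕜} (hs : 0 ≤ s) (ht : 0 ≤ t) (hu : 0 < u) (hw : 0 < w) (hsum : s + t = u + w)
    (h : s • y + t • z = u • a + w • b) :
    ∃ x, x ∈ segment 𝕜 y z ∧ x ∈ openSegment 𝕜 a b := by
  refine ⟨(u + w)⁻¹ • (u • a + w • b),
    mem_segment_iff_div.2 ⟨s, t, hs, ht, hsum ▸ add_pos hu hw, ?_⟩,
    mem_openSegment_iff_div.2 ⟨u, w, hu, hw, ?_⟩⟩
  · rw [hsum, ← h]
    simp only [div_eq_inv_mul, mul_smul, smul_add]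
  · simp only [div_eq_inv_mul, mul_smul, smul_add]

theorem AffineSubspace.SOppSide.dist_lineMap_lt {V P : Type*} [NormedAddCommGroup V]
    [NormedSpace ℝ V] [StrictConvexSpace ℝ V] [MetricSpace P] [NormedAddTorsor V P]
    {s : AffineSubspace ℝ P} {c d p : P} (h : s.SOppSide c d) (hp : p ∈ s) {t : ℝ}
    (ht₀ : 0 < t) (ht₁ : t < 1) :
    dist (lineMap c d t) p < (1 - t) * dist c p + t * dist d p := by
  have h1t : 0 < 1 - t := sub_pos.2 ht₁
  have hsplit : lineMap c d t -ᵥ p = (1 - t) • (c -ᵥ p) + t • (d -ᵥ p) := by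
    rw [lineMap_apply, vadd_vsub_assoc, ← vsub_sub_vsub_cancel_right d c p]
    module
  have hray : ¬SameRay ℝ ((1 - t) • (c -ᵥ p)) (t • (d -ᵥ p)) := fun hray =>
    h.not_wSameSide ⟨p, hp, p, hp, by
      simpa [inv_smul_smul₀ h1t.ne', inv_smul_smul₀ ht₀.ne'] using
        (hray.pos_smul_left (inv_pos.2 h1t)).pos_smul_right (inv_pos.2 ht₀)⟩
  calc dist (lineMap c d t) p = ‖(1 - t) • (c -ᵥ p) + t • (d -ᵥ p)‖ := by
        rw [dist_eq_norm_vsub V, hsplit]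
    _ < ‖(1 - t) • (c -ᵥ p)‖ + ‖t • (d -ᵥ p)‖ := norm_add_lt_of_not_sameRay hray
    _ = (1 - t) * dist c p + t * dist d p := by
        rw [norm_smul, norm_smul, Real.norm_of_nonneg h1t.le, Real.norm_of_nonneg ht₀.le,
          dist_eq_norm_vsub V, dist_eq_norm_vsub V]

theorem perimeter_smul_incenter (p q r : EuclideanSpace ℝ (Fin 2)) :
    (‖q - r‖ + ‖r - p‖ + ‖p - q‖) • incenter p q r =
      ‖q - r‖ • p + ‖r - p‖ • q + ‖p - q‖ • r := by
  by_cases hP : ‖q - r‖ + ‖r - p‖ + ‖p - q‖ = 0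
  · have := norm_nonneg (q - r)
    have := norm_nonneg (r - p)
    have := norm_nonneg (p - q)
    simp [show ‖q - r‖ = 0 by linarith, show ‖r - p‖ = 0 by linarith,
      show ‖p - q‖ = 0 by linarith]
  · exact smul_inv_smul₀ hP _

theorem incenter_segment_crosses_shared_edge_general
    (a b c d : EuclideanSpace ℝ (Fin 2))
    (hopp : (affineSpan ℝ ({a, b} : Set (EuclideanSpace ℝ (Fin 2)))).SOppSide c d) :
    ∃ x, x ∈ segment ℝ (incenter a b c) (incenter a b d) ∧ x ∈ openSegment ℝ a b := by
  obtain ⟨e, he, hsbtw⟩ := hopp.exists_sbtw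
  obtain ⟨t, ⟨ht₀, ht₁⟩, rfl⟩ := hsbtw.mem_image_Ioo
  obtain ⟨r, hr⟩ := mem_affineSpan_pair_iff_exists_lineMap_eq.1 he
  have hb := hopp.dist_lineMap_lt (right_mem_affineSpan_pair ℝ a b) ht₀ ht₁
  have ha := hopp.dist_lineMap_lt (left_mem_affineSpan_pair ℝ a b) ht₀ ht₁
  rw [← hr, dist_lineMap_right, Real.norm_eq_abs] at hb
  rw [← hr, dist_lineMap_left, Real.norm_eq_abs] at ha
  simp only [dist_eq_norm, norm_sub_rev c b, norm_sub_rev d b] at ha hb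
  have hcross : (1 - t) • c + t • d = (1 - r) • a + r • b := by
    rw [← lineMap_apply_module, ← lineMap_apply_module, hr]
  refine exists_mem_segment_mem_openSegment_of_smul_add_smul_eq
    (s := (1 - t) * (‖b - c‖ + ‖c - a‖ + ‖a - b‖)) (t := t * (‖b - d‖ + ‖d - a‖ + ‖a - b‖))
    (u := (1 - t) * ‖b - c‖ + t * ‖b - d‖ + (1 - r) * ‖a - b‖)
    (w := (1 - t) * ‖c - a‖ + t * ‖d - a‖ + r * ‖a - b‖)
    (mul_nonneg (sub_nonneg.2 ht₁.le) (by positivity)) (by positivity) ?_ ?_ (by ring) ?_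
  · nlinarith [neg_abs_le (1 - r), norm_nonneg (a - b)]
  · nlinarith [neg_abs_le r, norm_nonneg (a - b)]
  · rw [mul_smul, mul_smul, perimeter_smul_incenter, perimeter_smul_incenter]
    linear_combination (norm := module) ‖a - b‖ • hcross

/-- If `T₁ = conv{a, b, c}` and `T₂ = conv{a, b, d}` are nondegenerate
triangles with `c` and `d` strictly on opposite sides of the line through `a` and `b`,
then the segment joining the incenter of `T₁` to the incenter of `T₂` meets the open
segment between `a` and `b`. -/
theorem incenter_segment_crosses_shared_edge
    (a b c d : EuclideanSpace ℝ (Fin 2))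
    (h1 : AffineIndependent ℝ ![a, b, c])
    (h2 : AffineIndependent ℝ ![a, b, d])
    (hopp : (affineSpan ℝ ({a, b} : Set (EuclideanSpace ℝ (Fin 2)))).SOppSide c d) :
    ∃ x, x ∈ segment ℝ (incenter a b c) (incenter a b d) ∧ x ∈ openSegment ℝ a b :=
  incenter_segment_crosses_shared_edge_general a b c d hopp
end
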